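/- For every integer m ≥ 1, every k > 0 and every τ > 0, the following identity holds: ∫₀^τ ( k² J_m'(kr)² r + m² J_m(kr)²/r ) dr = k² ∫₀^τ J_{m−1}(kr)² r dr − m · J_m(kτ)². -/

import Mathlib

open MeasureTheory Filter Set

/-- The Bessel function of the first kind of order `ν`:
`J_ν(x) = ∑ₖ (-1)^k / (k! Γ(ν+k+1)) (x/2)^(2k+ν)`. -/
noncomputable def besselJ (ν : ℝ) (x : ℝ) : ℝ :=
  ∑' k : ℕ, ((-1 : ℝ) ^ k / ((k.factorial : ℝ) * Real.Gamma (ν + (k : ℝ) + 1))) *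
    (x / 2) ^ (2 * (k : ℝ) + ν)

/-- The derivative `J_ν'` of the Bessel function. -/
noncomputable def besselJDeriv (ν : ℝ) (x : ℝ) : ℝ := deriv (besselJ ν) x

/-- `besselJZero ν s` is the `s`-th positive zero of `J_ν` (for `s ≥ 1`),
listed in increasing order. -/
noncomputable def besselJZero (ν : ℝ) : ℕ → ℝ
  | 0 => 0
  | s + 1 => sInf {x : ℝ | besselJZero ν s < x ∧ besselJ ν x = 0}

/-- `besselJPrimeZero ν s` is the `s`-th positive zero of `J_ν'` (for `s ≥ 1`),
listed in increasing order. -/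
noncomputable def besselJPrimeZero (ν : ℝ) : ℕ → ℝ
  | 0 => 0
  | s + 1 => sInf {x : ℝ | besselJPrimeZero ν s < x ∧ besselJDeriv ν x = 0}

/-!
Write `m = n + 1`. Termwise differentiation of the power series of `J_{n+1}` and the identity
`(n+k+1)! = (n+k+1) (n+k)!` give the recurrence `x J_{n+1}'(x) + (n+1) J_{n+1}(x) = x J_n(x)`.
Squaring it at `x = k r` and dividing by `r` turns the integrand on the left into
`k² r J_n(k r)²` minus the cross term `2 (n+1) k J_{n+1}(k r) J_{n+1}'(k r)`, which is the
derivative of `(n+1) J_{n+1}(k r)²`; this integrates to `(n+1) J_{n+1}(k τ)²` because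
`J_{n+1}(0) = 0`.
-/

open scoped Nat

noncomputable def besselSeries (b : ℕ → ℝ) (p : ℕ) (x : ℝ) : ℝ :=
  ∑' k, b k * (x / 2) ^ (2 * k + p)

/-- The coefficients of the termwise derivative of `besselSeries b (p + 1)`. -/
noncomputable def besselSeriesDerivCoeff (b : ℕ → ℝ) (p k : ℕ) : ℝ :=
  b k * (2 * k + p + 1) / 2

section FactorialBound

variable {b : ℕ → ℝ} {C : ℝ}

theorem summable_factorial_majorant (C R : ℝ) (p : ℕ) :
    Summable fun k : ℕ => C ^ (k + 1) / k ! * R ^ (2 * k + p) := by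
  refine ((Real.summable_pow_div_factorial (C * R ^ 2)).mul_left (C * R ^ p)).congr fun k => ?_
  rw [pow_succ C, pow_add R, pow_mul, mul_pow]
  ring

theorem norm_besselSeries_term_le (hb : ∀ k, |b k| ≤ C ^ (k + 1) / k !) (p k : ℕ) {R y : ℝ}
    (hy : |y| ≤ 2 * R) :
    ‖b k * (y / 2) ^ (2 * k + p)‖ ≤ C ^ (k + 1) / k ! * R ^ (2 * k + p) := by
  have hy2 : |y / 2| ≤ R := by rw [abs_div, abs_two]; linarith
  rw [Real.norm_eq_abs, abs_mul, abs_pow]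
  exact mul_le_mul (hb k) (pow_le_pow_left₀ (abs_nonneg _) hy2 _) (by positivity)
    ((abs_nonneg _).trans (hb k))

theorem summable_besselSeries (hb : ∀ k, |b k| ≤ C ^ (k + 1) / k !) (p : ℕ) (x : ℝ) :
    Summable fun k => b k * (x / 2) ^ (2 * k + p) :=
  .of_norm_bounded (summable_factorial_majorant C (|x| / 2) p)
    fun k => norm_besselSeries_term_le hb p k (by linarith)

theorem continuous_besselSeries (hb : ∀ k, |b k| ≤ C ^ (k + 1) / k !) (p : ℕ) :
    Continuous (besselSeries b p) := by
  refine continuous_iff_continuousAt.2 fun x => ?_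
  have hx : x ∈ Metric.ball (0 : ℝ) (|x| + 1) := by simp
  refine (continuousOn_tsum (fun k => by fun_prop)
    (summable_factorial_majorant C ((|x| + 1) / 2) p) fun k y hy => ?_).continuousAt
    (Metric.isOpen_ball.mem_nhds hx)
  refine norm_besselSeries_term_le hb p k ?_
  rw [mem_ball_zero_iff, Real.norm_eq_abs] at hy
  linarith

theorem abs_besselSeriesDerivCoeff_le (hb : ∀ k, |b k| ≤ C ^ (k + 1) / k !) (p k : ℕ) :
    |besselSeriesDerivCoeff b p k| ≤ (2 * (p + 1) * C) ^ (k + 1) / k ! := by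
  have hfactor : |(2 * k + p + 1 : ℝ) / 2| ≤ (2 * (p + 1)) ^ (k + 1) := by
    have hk : (k : ℝ) + 1 ≤ 2 ^ (k + 1) := by
      exact_mod_cast (Nat.lt_two_pow_self (n := k + 1)).le
    have hp : (p : ℝ) + 1 ≤ (p + 1) ^ (k + 1) := le_self_pow₀ (by simp) k.succ_ne_zero
    rw [abs_of_nonneg (by positivity), mul_pow]
    calc (2 * k + p + 1 : ℝ) / 2 ≤ (k + 1) * (p + 1) := by nlinarith [k.cast_nonneg (α := ℝ)]
      _ ≤ 2 ^ (k + 1) * (p + 1) ^ (k + 1) := mul_le_mul hk hp (by positivity) (by positivity)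
  calc |besselSeriesDerivCoeff b p k| = |b k| * |(2 * k + p + 1 : ℝ) / 2| := by
        rw [besselSeriesDerivCoeff, mul_div_assoc, abs_mul]
    _ ≤ C ^ (k + 1) / k ! * (2 * (p + 1)) ^ (k + 1) :=
        mul_le_mul (hb k) hfactor (abs_nonneg _) ((abs_nonneg _).trans (hb k))
    _ = (2 * (p + 1) * C) ^ (k + 1) / k ! := by rw [mul_pow _ C]; ring

theorem hasDerivAt_besselSeries (hb : ∀ k, |b k| ≤ C ^ (k + 1) / k !) (p : ℕ) (x : ℝ) :
    HasDerivAt (besselSeries b (p + 1)) (besselSeries (besselSeriesDerivCoeff b p) p x) x := by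
  have hx : x ∈ Metric.ball (0 : ℝ) (|x| + 1) := by simp
  refine hasDerivAt_tsum_of_isPreconnected
    (g' := fun k y => besselSeriesDerivCoeff b p k * (y / 2) ^ (2 * k + p))
    (summable_factorial_majorant (2 * (p + 1) * C) ((|x| + 1) / 2) p) Metric.isOpen_ball
    (convex_ball _ _).isPreconnected (fun k y _ => ?_) (fun k y hy => ?_) hx
    (summable_besselSeries hb (p + 1) x) hx
  · refine ((((hasDerivAt_id' y).div_const 2).fun_pow _).const_mul (b k)).congr_deriv ?_
    rw [besselSeriesDerivCoeff, show 2 * k + (p + 1) - 1 = 2 * k + p by omega]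
    push_cast
    ring
  · refine norm_besselSeries_term_le (abs_besselSeriesDerivCoeff_le hb p) p k ?_
    rw [mem_ball_zero_iff, Real.norm_eq_abs] at hy
    linarith

end FactorialBound

noncomputable def besselCoeff (n k : ℕ) : ℝ := (-1) ^ k / (k ! * (n + k) !)

theorem besselJ_natCast (n : ℕ) : besselJ n = besselSeries (besselCoeff n) n := by
  funext x
  refine tsum_congr fun k => ?_
  have hGamma : (n : ℝ) + k + 1 = ((n + k : ℕ) : ℝ) + 1 := by push_cast; ring
  have hexp : 2 * (k : ℝ) + n = ((2 * k + n : ℕ) : ℝ) := by push_cast; ring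
  rw [hGamma, Real.Gamma_nat_eq_factorial, hexp, Real.rpow_natCast, besselCoeff]

theorem abs_besselCoeff_le (n k : ℕ) : |besselCoeff n k| ≤ 1 ^ (k + 1) / k ! := by
  have h : (1 : ℝ) ≤ (n + k) ! := by exact_mod_cast (n + k).factorial_pos
  rw [besselCoeff, abs_div, abs_pow, abs_neg, abs_one, one_pow, one_pow,
    abs_of_pos (by positivity)]
  exact div_le_div_of_nonneg_left zero_le_one (by positivity)
    (le_mul_of_one_le_right (by positivity) h)

theorem besselCoeff_succ_mul (n k : ℕ) :
    besselCoeff (n + 1) k * (n + k + 1) = besselCoeff n k := by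
  rw [besselCoeff, besselCoeff, show n + 1 + k = n + k + 1 by omega, Nat.factorial_succ]
  push_cast
  field_simp

theorem continuous_besselJ_natCast (n : ℕ) : Continuous (besselJ n) := by
  rw [besselJ_natCast]
  exact continuous_besselSeries (abs_besselCoeff_le n) n

theorem hasDerivAt_besselJ_natCast_succ (n : ℕ) (x : ℝ) :
    HasDerivAt (besselJ ((n : ℝ) + 1))
      (besselSeries (besselSeriesDerivCoeff (besselCoeff (n + 1)) n) n x) x := by
  rw [← Nat.cast_succ, besselJ_natCast]
  exact hasDerivAt_besselSeries (abs_besselCoeff_le (n + 1)) n x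

theorem besselJDeriv_natCast_succ (n : ℕ) :
    besselJDeriv ((n : ℝ) + 1) =
      besselSeries (besselSeriesDerivCoeff (besselCoeff (n + 1)) n) n :=
  funext fun x => (hasDerivAt_besselJ_natCast_succ n x).deriv

theorem continuous_besselJDeriv_natCast_succ (n : ℕ) :
    Continuous (besselJDeriv ((n : ℝ) + 1)) := by
  rw [besselJDeriv_natCast_succ]
  exact continuous_besselSeries
    (abs_besselSeriesDerivCoeff_le (abs_besselCoeff_le (n + 1)) n) n

theorem besselJ_natCast_succ_zero (n : ℕ) : besselJ ((n : ℝ) + 1) 0 = 0 := by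
  rw [← Nat.cast_succ, besselJ_natCast, besselSeries]
  simp

theorem besselJ_recurrence (n : ℕ) (x : ℝ) :
    x * besselJDeriv ((n : ℝ) + 1) x + (n + 1) * besselJ ((n : ℝ) + 1) x = x * besselJ n x := by
  have hderiv := abs_besselSeriesDerivCoeff_le (abs_besselCoeff_le (n + 1)) n
  rw [besselJDeriv_natCast_succ, ← Nat.cast_succ, besselJ_natCast, besselJ_natCast, besselSeries,
    besselSeries, besselSeries, ← tsum_mul_left, ← tsum_mul_left, ← tsum_mul_left,
    ← ((summable_besselSeries hderiv n x).mul_left x).tsum_add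
      ((summable_besselSeries (abs_besselCoeff_le (n + 1)) (n + 1) x).mul_left _)]
  refine tsum_congr fun k => ?_
  rw [besselSeriesDerivCoeff, show 2 * k + (n + 1) = 2 * k + n + 1 by ring, pow_succ]
  push_cast
  linear_combination (x * (x / 2) ^ (2 * k + n)) * besselCoeff_succ_mul n k

theorem hasDerivAt_besselJ_natCast_succ_comp_mul_sq (n : ℕ) (k r : ℝ) :
    HasDerivAt (fun r => (n + 1) * besselJ ((n : ℝ) + 1) (k * r) ^ 2)
      (2 * (n + 1) * k * besselJ ((n : ℝ) + 1) (k * r) * besselJDeriv ((n : ℝ) + 1) (k * r))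
      r := by
  have hJ := (hasDerivAt_besselJ_natCast_succ n (k * r)).comp r ((hasDerivAt_id' r).const_mul k)
  rw [← besselJDeriv_natCast_succ] at hJ
  refine ((hJ.fun_pow 2).const_mul ((n : ℝ) + 1)).congr_deriv ?_
  simp only [Function.comp_def]
  ring

theorem besselJ_energy_integrand_eq (n : ℕ) (k : ℝ) {r : ℝ} (hr : r ≠ 0) :
    k ^ 2 * besselJDeriv ((n : ℝ) + 1) (k * r) ^ 2 * r
        + ((n : ℝ) + 1) ^ 2 * besselJ ((n : ℝ) + 1) (k * r) ^ 2 / r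
      = k ^ 2 * (besselJ n (k * r) ^ 2 * r)
        - 2 * (n + 1) * k * besselJ ((n : ℝ) + 1) (k * r)
          * besselJDeriv ((n : ℝ) + 1) (k * r) := by
  have h := besselJ_recurrence n (k * r)
  field_simp
  linear_combination (k * r * besselJDeriv ((n : ℝ) + 1) (k * r)
    + (n + 1) * besselJ ((n : ℝ) + 1) (k * r) + k * r * besselJ n (k * r)) * h

theorem stmt0_general (m : ℕ) (hm : 1 ≤ m) (k : ℝ) (τ : ℝ) :
    (∫ r in (0:ℝ)..τ,
        (k ^ 2 * (besselJDeriv m (k * r)) ^ 2 * r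
          + (m : ℝ) ^ 2 * (besselJ m (k * r)) ^ 2 / r))
      = k ^ 2 * (∫ r in (0:ℝ)..τ, (besselJ ((m : ℝ) - 1) (k * r)) ^ 2 * r)
          - (m : ℝ) * (besselJ m (k * τ)) ^ 2 := by
  obtain ⟨n, rfl⟩ : ∃ n, m = n + 1 := ⟨m - 1, by omega⟩
  push_cast
  rw [add_sub_cancel_right]
  have hJ := continuous_besselJ_natCast (n + 1)
  have hJ' := continuous_besselJDeriv_natCast_succ n
  have hJn := continuous_besselJ_natCast n
  push_cast at hJ
  have hFTC := intervalIntegral.integral_eq_sub_of_hasDerivAt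
    (fun r _ => hasDerivAt_besselJ_natCast_succ_comp_mul_sq n k r)
    (Continuous.intervalIntegrable (by fun_prop) 0 τ)
  rw [intervalIntegral.integral_congr_ae ((Measure.ae_ne volume 0).mono
      fun r hr _ => besselJ_energy_integrand_eq n k hr),
    intervalIntegral.integral_sub (Continuous.intervalIntegrable (by fun_prop) 0 τ)
      (Continuous.intervalIntegrable (by fun_prop) 0 τ),
    intervalIntegral.integral_const_mul, hFTC, mul_zero, besselJ_natCast_succ_zero]
  ring

/-- For every integer `m ≥ 1`, `k > 0`, `τ > 0`:
`∫₀^τ (k² J_m'(kr)² r + m² J_m(kr)²/r) dr = k² ∫₀^τ J_{m-1}(kr)² r dr - m J_m(kτ)²`. -/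
theorem stmt0 (m : ℕ) (hm : 1 ≤ m) (k : ℝ) (hk : 0 < k) (τ : ℝ) (hτ : 0 < τ) :
    (∫ r in (0:ℝ)..τ,
        (k ^ 2 * (besselJDeriv m (k * r)) ^ 2 * r
          + (m : ℝ) ^ 2 * (besselJ m (k * r)) ^ 2 / r))
      = k ^ 2 * (∫ r in (0:ℝ)..τ, (besselJ ((m : ℝ) - 1) (k * r)) ^ 2 * r)
          - (m : ℝ) * (besselJ m (k * τ)) ^ 2 :=
  stmt0_general m hm k τ
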